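/- (SLLN for the local clustering coefficient) Let C_n(1) = T_n(1)/V_n(1) if V_n(1) ≥ 1 and C_n(1) = w otherwise, where T_n(1) and V_n(1) count triangles and connected neighbor-pairs at vertex 1 in the random graph on n vertices. Then C_n(1) converges almost surely to C(1) := E_T(X_1)/E_D(X_1)^2 · I{E_D(X_1) > 0} + w · I{E_D(X_1) = 0}. -/

import Mathlib

/-!
Fix the label `x` of the root. The remaining labels `X 1, X 2, …` are i.i.d., so `T_n` and `V_n`
are U-statistics of order two with kernels `H` taking values in `[0, 1]`. For such a statistic
`U_n = ∑_{0<j<k<n} H(X_j, X_k)`, two summands are correlated only if their index pairs meet, so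
`Var U_n = O(n³)`. Along `n = k²` the normalised deviations `(U_n - E U_n) / n²` then have
summable second moments and tend to `0` almost surely, and since `U_n` is nondecreasing in `n`,
`U_n / n² → (∬ H) / 2` along the whole sequence. Hence `T_n / n² → E_T(x) / 2` and
`V_n / n² → E_D(x)² / 2`. If `E_D(x) > 0` then `V_n → ∞` and `C_n → E_T(x) / E_D(x)²`; if
`E_D(x) = 0` the root is almost surely isolated and `C_n = w`. Because `X 0` is independent of
`(X 1, X 2, …)`, Fubini's theorem turns this statement for each fixed `x` into the
unconditional one.
-/

open MeasureTheory ProbabilityTheory Finset Filter Topology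
open scoped Classical

theorem tendsto_natSqrt_atTop : Tendsto Nat.sqrt atTop atTop :=
  tendsto_atTop_atTop.2 fun b => ⟨b * b, fun _ hn => Nat.le_sqrt.2 hn⟩

theorem tendsto_div_sq_of_monotone_of_tendsto_sq {u : ℕ → ℝ} {L : ℝ} (hmono : Monotone u)
    (hnonneg : ∀ n, 0 ≤ u n) (h : Tendsto (fun k : ℕ => u (k ^ 2) / (k : ℝ) ^ 4) atTop (𝓝 L)) :
    Tendsto (fun n : ℕ => u n / (n : ℝ) ^ 2) atTop (𝓝 L) := by
  have hratio : Tendsto (fun k : ℕ => ((k : ℝ) / (k + 1)) ^ 4) atTop (𝓝 1) := by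
    simpa using (tendsto_natCast_div_add_atTop (1 : ℝ)).pow 4
  have hlower : Tendsto (fun k : ℕ => u (k ^ 2) / ((k : ℝ) + 1) ^ 4) atTop (𝓝 L) := by
    have := h.mul hratio
    rw [mul_one] at this
    refine this.congr' ?_
    filter_upwards [eventually_ne_atTop 0] with k hk
    field_simp
  have hupper : Tendsto (fun k : ℕ => u ((k + 1) ^ 2) / (k : ℝ) ^ 4) atTop (𝓝 L) := by
    have hshift := h.comp (tendsto_add_atTop_nat 1)
    have := hshift.mul (hratio.inv₀ one_ne_zero)
    rw [inv_one, mul_one] at this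
    refine this.congr' ?_
    filter_upwards [eventually_ne_atTop 0] with k hk
    simp only [Function.comp_apply, Nat.cast_add, Nat.cast_one]
    field_simp
  refine tendsto_of_tendsto_of_tendsto_of_le_of_le' (hlower.comp tendsto_natSqrt_atTop)
    (hupper.comp tendsto_natSqrt_atTop) ?_ ?_
  all_goals
    filter_upwards [eventually_ne_atTop 0] with n hn
    have hs : 0 < Nat.sqrt n := Nat.sqrt_pos.2 (Nat.pos_of_ne_zero hn)
    have hlo : ((Nat.sqrt n : ℕ) : ℝ) ^ 2 ≤ n := by exact_mod_cast Nat.sqrt_le' n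
    have hhi : (n : ℝ) ≤ ((Nat.sqrt n : ℕ) + 1 : ℝ) ^ 2 := by
      exact_mod_cast (Nat.lt_succ_sqrt' n).le
    simp only [Function.comp_apply]
  · refine div_le_div₀ (hnonneg n) (hmono (Nat.sqrt_le' n)) (by positivity) ?_
    nlinarith
  · refine div_le_div₀ (hnonneg _) (hmono (Nat.lt_succ_sqrt' n).le) (by positivity) ?_
    nlinarith

theorem tendsto_ite_div_of_tendsto_div_sq {t v : ℕ → ℝ} {a b : ℝ} (w : ℝ) (hb : 0 < b)
    (ht : Tendsto (fun n : ℕ => t n / (n : ℝ) ^ 2) atTop (𝓝 a))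
    (hv : Tendsto (fun n : ℕ => v n / (n : ℝ) ^ 2) atTop (𝓝 b)) :
    Tendsto (fun n => if 1 ≤ v n then t n / v n else w) atTop (𝓝 (a / b)) := by
  have hsq : Tendsto (fun n : ℕ => (n : ℝ) ^ 2) atTop atTop :=
    (tendsto_pow_atTop two_ne_zero).comp tendsto_natCast_atTop_atTop
  have hv_top : Tendsto v atTop atTop := by
    refine (hv.pos_mul_atTop hb hsq).congr' ?_
    filter_upwards [eventually_ne_atTop 0] with n hn
    field_simp
  refine (ht.div hv hb.ne').congr' ?_
  filter_upwards [hv_top.eventually_ge_atTop 1, eventually_ne_atTop 0] with n hvn hn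
  rw [Pi.div_apply, if_pos hvn, div_div_div_cancel_right₀ (by positivity)]

theorem ae_tendsto_zero_of_summable_integral_sq {Ω : Type*} [MeasurableSpace Ω] {P : Measure Ω}
    {R : ℕ → Ω → ℝ} (hint : ∀ k, Integrable (fun ω => R k ω ^ 2) P)
    (hsum : Summable fun k => ∫ ω, R k ω ^ 2 ∂P) :
    ∀ᵐ ω ∂P, Tendsto (fun k => R k ω) atTop (𝓝 0) := by
  have hmeas : ∀ k, AEMeasurable (fun ω => ENNReal.ofReal (R k ω ^ 2)) P :=
    fun k => (hint k).aemeasurable.ennreal_ofReal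
  have hfinite : ∫⁻ ω, ∑' k, ENNReal.ofReal (R k ω ^ 2) ∂P ≠ ⊤ := by
    rw [lintegral_tsum hmeas]
    simp_rw [← ofReal_integral_eq_lintegral_ofReal (hint _) (ae_of_all _ fun _ => sq_nonneg _)]
    rw [← ENNReal.ofReal_tsum_of_nonneg (fun k => integral_nonneg fun _ => sq_nonneg _) hsum]
    exact ENNReal.ofReal_ne_top
  filter_upwards [ae_lt_top' (AEMeasurable.tsum hmeas) hfinite] with ω hω
  have hsq : Tendsto (fun k => R k ω ^ 2) atTop (𝓝 0) := by
    have := (ENNReal.tendsto_toReal ENNReal.zero_ne_top).comp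
      (ENNReal.tendsto_atTop_zero_of_tsum_ne_top hω.ne)
    simpa [Function.comp_def, ENNReal.toReal_ofReal (sq_nonneg _)] using this
  rw [tendsto_zero_iff_abs_tendsto_zero]
  simpa [Function.comp_def, Real.sqrt_sq_eq_abs] using hsq.sqrt

theorem integral_sq_sum_le_sum_card {Ω ι : Type*} [MeasurableSpace Ω] {P : Measure Ω}
    [IsProbabilityMeasure P] (S : Finset ι) {c : ι → Ω → ℝ} (hc : ∀ i, Measurable (c i))
    (hbound : ∀ i ω, |c i ω| ≤ 1) (hmean : ∀ i ∈ S, ∫ ω, c i ω ∂P = 0) (A : ι → Finset ι)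
    (hindep : ∀ i ∈ S, ∀ j ∈ S, j ∉ A i → IndepFun (c i) (c j) P) :
    ∫ ω, (∑ i ∈ S, c i ω) ^ 2 ∂P ≤ ∑ i ∈ S, (#(A i) : ℝ) := by
  have hprod_bound : ∀ i j ω, |c i ω * c j ω| ≤ 1 := fun i j ω => by
    rw [abs_mul]; exact mul_le_one₀ (hbound i ω) (abs_nonneg _) (hbound j ω)
  have hprod_int : ∀ i j, Integrable (fun ω => c i ω * c j ω) P := fun i j =>
    .of_bound ((hc i).mul (hc j)).aestronglyMeasurable 1 (ae_of_all _ (hprod_bound i j))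
  have hterm : ∀ i ∈ S, ∀ j ∈ S, ∫ ω, c i ω * c j ω ∂P ≤ if j ∈ A i then 1 else 0 := by
    intro i hi j hj
    split_ifs with hij
    · calc ∫ ω, c i ω * c j ω ∂P ≤ ∫ _, (1 : ℝ) ∂P :=
            integral_mono (hprod_int i j) (integrable_const 1)
              fun ω => (le_abs_self _).trans (hprod_bound i j ω)
        _ = 1 := by simp
    · have := (hindep i hi j hj hij).integral_mul_eq_mul_integral (hc i).aestronglyMeasurable
        (hc j).aestronglyMeasurable
      simp only [Pi.mul_apply, hmean i hi, zero_mul] at this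
      exact this.le
  calc ∫ ω, (∑ i ∈ S, c i ω) ^ 2 ∂P = ∑ i ∈ S, ∑ j ∈ S, ∫ ω, c i ω * c j ω ∂P := by
        simp_rw [sq, Finset.sum_mul_sum]
        rw [integral_finsetSum _ fun i _ => integrable_finsetSum _ fun j _ => hprod_int i j]
        exact sum_congr rfl fun i _ => integral_finsetSum _ fun j _ => hprod_int i j
    _ ≤ ∑ i ∈ S, ∑ j ∈ S, if j ∈ A i then (1 : ℝ) else 0 :=
        sum_le_sum fun i hi => sum_le_sum fun j hj => hterm i hi j hj
    _ ≤ ∑ i ∈ S, (#(A i) : ℝ) := sum_le_sum fun i _ => by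
        rw [sum_boole]
        exact_mod_cast card_le_card fun j hj => (mem_filter.1 hj).2

def orderedPairs (n : ℕ) : Finset (ℕ × ℕ) := (Ioo 0 n ×ˢ Ioo 0 n).filter fun p => p.1 < p.2

theorem sum_Ioo_Ioo_eq_sum_orderedPairs {M : Type*} [AddCommMonoid M] (f : ℕ → ℕ → M) (n : ℕ) :
    ∑ j ∈ Ioo 0 n, ∑ k ∈ Ioo j n, f j k = ∑ p ∈ orderedPairs n, f p.1 p.2 := by
  rw [orderedPairs, sum_filter, sum_product]
  refine sum_congr rfl fun j hj => ?_
  rw [← sum_filter]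
  congr 1
  ext k
  simp only [mem_filter, mem_Ioo] at hj ⊢
  omega

theorem orderedPairs_mono : Monotone orderedPairs := fun _ _ h =>
  filter_subset_filter _ (product_subset_product (Ioo_subset_Ioo_right h) (Ioo_subset_Ioo_right h))

theorem card_orderedPairs_le (n : ℕ) : #(orderedPairs n) ≤ n ^ 2 :=
  calc #(orderedPairs n) ≤ #(Ioo 0 n ×ˢ Ioo 0 n) := card_filter_le _ _
    _ ≤ n ^ 2 := by rw [card_product, Nat.card_Ioo, sq]; exact Nat.mul_le_mul (by omega) (by omega)

theorem card_orderedPairs_mul_two (n : ℕ) : #(orderedPairs n) * 2 = (n - 1) * (n - 2) := by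
  have hcard : #(orderedPairs n) = ∑ j ∈ Ico 1 n, (n - 1 - j) := by
    have := sum_Ioo_Ioo_eq_sum_orderedPairs (fun _ _ => 1) n
    simp only [sum_const, Nat.card_Ioo, smul_eq_mul, mul_one] at this
    rw [← this]
    exact sum_congr (by ext; simp; omega) fun j _ => by omega
  rcases Nat.eq_zero_or_pos n with rfl | hn
  · simp [hcard]
  have hreflect := sum_Ico_reflect (fun j => j) 1 (by omega : n ≤ n - 1 + 1)
  rw [Nat.sub_add_cancel hn, Nat.sub_self, ← range_eq_Ico] at hreflect
  rw [hcard, hreflect, sum_range_id_mul_two]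
  rfl

theorem tendsto_card_orderedPairs_div_sq :
    Tendsto (fun n : ℕ => (#(orderedPairs n) : ℝ) / (n : ℝ) ^ 2) atTop (𝓝 (1 / 2)) := by
  have hinv : Tendsto (fun n : ℕ => (n : ℝ)⁻¹) atTop (𝓝 0) := tendsto_inv_atTop_nhds_zero_nat
  have h : Tendsto (fun n : ℕ => (1 - (n : ℝ)⁻¹) * (1 - 2 * (n : ℝ)⁻¹) / 2) atTop (𝓝 (1 / 2)) := by
    simpa using (((tendsto_const_nhds (x := (1 : ℝ))).sub hinv).mul
      ((tendsto_const_nhds (x := (1 : ℝ))).sub (hinv.const_mul 2))).div_const 2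
  refine h.congr' ?_
  filter_upwards [eventually_ge_atTop 2] with n hn
  have hcard : (#(orderedPairs n) : ℝ) = ((n : ℝ) - 1) * ((n : ℝ) - 2) / 2 := by
    have := congrArg (Nat.cast (R := ℝ)) (card_orderedPairs_mul_two n)
    push_cast [Nat.cast_sub (by omega : 1 ≤ n), Nat.cast_sub hn] at this
    rw [eq_div_iff two_ne_zero, this]
  rw [hcard]
  field_simp

def pairSum {α : Type*} (F : α → α → ℝ) (s : ℕ → α) (n : ℕ) : ℝ :=
  ∑ j ∈ Ioo 0 n, ∑ k ∈ Ioo j n, F (s j) (s k)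

theorem pairSum_congr {α : Type*} (F : α → α → ℝ) {s t : ℕ → α} (h : ∀ j, j ≠ 0 → s j = t j)
    (n : ℕ) : pairSum F s n = pairSum F t n :=
  sum_congr rfl fun j hj => sum_congr rfl fun k hk => by
    simp only [mem_Ioo] at hj hk
    rw [h j (by omega), h k (by omega)]

theorem card_meeting_pairs_le (n : ℕ) (p : ℕ × ℕ) :
    #(({p.1, p.2} ×ˢ range n) ∪ (range n ×ˢ {p.1, p.2})) ≤ 4 * n := by
  have hpair : #({p.1, p.2} : Finset ℕ) ≤ 2 := card_le_two
  calc _ ≤ #(({p.1, p.2} : Finset ℕ) ×ˢ range n) + #(range n ×ˢ ({p.1, p.2} : Finset ℕ)) :=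
        card_union_le _ _
    _ ≤ 2 * n + n * 2 := by
        rw [card_product, card_product, card_range]
        exact Nat.add_le_add (Nat.mul_le_mul_right _ hpair) (Nat.mul_le_mul_left _ hpair)
    _ = 4 * n := by ring

section UStatistic

variable {Ω α : Type*} [MeasurableSpace Ω] [MeasurableSpace α] {P : Measure Ω}
  [IsProbabilityMeasure P] {X : ℕ → Ω → α} {μ : Measure α} [IsProbabilityMeasure μ]
  {H : α → α → ℝ}

theorem integral_comp_eq_integral_integral (hX : ∀ i, Measurable (X i)) (hindep : iIndepFun X P)
    (hlaw : ∀ i, P.map (X i) = μ) (hH : Measurable (Function.uncurry H))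
    (hHb : ∀ y z, |H y z| ≤ 1) {i j : ℕ} (hij : i ≠ j) :
    ∫ ω, H (X i ω) (X j ω) ∂P = ∫ y, ∫ z, H y z ∂μ ∂μ := by
  have hpair : P.map (fun ω => (X i ω, X j ω)) = μ.prod μ := by
    have := (indepFun_iff_map_prod_eq_prod_map_map (hX i).aemeasurable
      (hX j).aemeasurable).1 (hindep.indepFun hij)
    rwa [hlaw, hlaw] at this
  have hint : Integrable (Function.uncurry H) (μ.prod μ) :=
    .of_bound hH.aestronglyMeasurable 1 (ae_of_all _ fun p => hHb p.1 p.2)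
  calc ∫ ω, H (X i ω) (X j ω) ∂P = ∫ p, Function.uncurry H p ∂(μ.prod μ) := by
        rw [← hpair, integral_map ((hX i).prodMk (hX j)).aemeasurable hH.aestronglyMeasurable]
        rfl
    _ = ∫ y, ∫ z, H y z ∂μ ∂μ := integral_prod _ hint

theorem integral_integral_mem_Icc (hH0 : ∀ y z, 0 ≤ H y z) (hH1 : ∀ y z, H y z ≤ 1) :
    ∫ y, ∫ z, H y z ∂μ ∂μ ∈ Set.Icc (0 : ℝ) 1 := by
  have hinner : ∀ y, ∫ z, H y z ∂μ ∈ Set.Icc (0 : ℝ) 1 := fun y =>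
    ⟨integral_nonneg (hH0 y), (integral_mono_of_nonneg (ae_of_all _ (hH0 y)) (integrable_const 1)
      (ae_of_all _ (hH1 y))).trans_eq (by simp)⟩
  exact ⟨integral_nonneg fun y => (hinner y).1, (integral_mono_of_nonneg
    (ae_of_all _ fun y => (hinner y).1) (integrable_const 1)
    (ae_of_all _ fun y => (hinner y).2)).trans_eq (by simp)⟩

theorem abs_sub_integral_integral_le_one (hH0 : ∀ y z, 0 ≤ H y z) (hH1 : ∀ y z, H y z ≤ 1)
    (y z : α) : |H y z - ∫ y, ∫ z, H y z ∂μ ∂μ| ≤ 1 := by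
  have hθ := integral_integral_mem_Icc (μ := μ) hH0 hH1
  exact abs_sub_le_iff.2 ⟨by linarith [hH1 y z, hθ.1], by linarith [hH0 y z, hθ.2]⟩

theorem integral_sq_sum_orderedPairs_sub_le (hX : ∀ i, Measurable (X i))
    (hindep : iIndepFun X P) (hlaw : ∀ i, P.map (X i) = μ) (hH : Measurable (Function.uncurry H))
    (hH0 : ∀ y z, 0 ≤ H y z) (hH1 : ∀ y z, H y z ≤ 1) (n : ℕ) :
    ∫ ω, (∑ p ∈ orderedPairs n, (H (X p.1 ω) (X p.2 ω) - ∫ y, ∫ z, H y z ∂μ ∂μ)) ^ 2 ∂P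
      ≤ 4 * (n : ℝ) ^ 3 := by
  set θ := ∫ y, ∫ z, H y z ∂μ ∂μ
  have hHb : ∀ y z, |H y z| ≤ 1 := fun y z => abs_le.2 ⟨by linarith [hH0 y z], hH1 y z⟩
  have hcomp : ∀ i j, Measurable fun ω => H (X i ω) (X j ω) := fun i j =>
    hH.comp ((hX i).prodMk (hX j))
  refine (integral_sq_sum_le_sum_card _ (fun p => (hcomp p.1 p.2).sub_const θ)
    (fun p ω => abs_sub_integral_integral_le_one hH0 hH1 _ _) ?_
    (fun p => ({p.1, p.2} ×ˢ range n) ∪ (range n ×ˢ {p.1, p.2})) ?_).trans ?_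
  · intro p hp
    simp only [orderedPairs, mem_filter] at hp
    rw [integral_sub (.of_bound (hcomp _ _).aestronglyMeasurable 1 (ae_of_all _ fun ω => hHb _ _))
      (integrable_const θ), integral_comp_eq_integral_integral hX hindep hlaw hH hHb hp.2.ne,
      integral_const, probReal_univ, one_smul, sub_self]
  · intro p hp q hq hpq
    simp only [orderedPairs, mem_filter, mem_product, mem_Ioo] at hp hq
    simp only [mem_union, mem_product, mem_insert, mem_singleton, mem_range, not_or,
      not_and_or] at hpq
    have hind := hindep.indepFun_prodMk_prodMk hX p.1 p.2 q.1 q.2 (by omega) (by omega)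
      (by omega) (by omega)
    exact hind.comp (hH.sub_const θ) (hH.sub_const θ)
  · calc ∑ p ∈ orderedPairs n, (#(({p.1, p.2} ×ˢ range n) ∪ (range n ×ˢ {p.1, p.2})) : ℝ)
        ≤ ∑ _p ∈ orderedPairs n, (4 * n : ℝ) :=
          sum_le_sum fun p _ => by exact_mod_cast card_meeting_pairs_le n p
      _ = #(orderedPairs n) * (4 * n) := by rw [sum_const, nsmul_eq_mul]
      _ ≤ (n : ℝ) ^ 2 * (4 * n) := by
          gcongr; exact_mod_cast card_orderedPairs_le n
      _ = 4 * (n : ℝ) ^ 3 := by ring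

theorem ae_tendsto_sum_orderedPairs_sq_sub_div (hX : ∀ i, Measurable (X i))
    (hindep : iIndepFun X P) (hlaw : ∀ i, P.map (X i) = μ) (hH : Measurable (Function.uncurry H))
    (hH0 : ∀ y z, 0 ≤ H y z) (hH1 : ∀ y z, H y z ≤ 1) :
    ∀ᵐ ω ∂P, Tendsto (fun k : ℕ => (∑ p ∈ orderedPairs (k ^ 2),
      (H (X p.1 ω) (X p.2 ω) - ∫ y, ∫ z, H y z ∂μ ∂μ)) / (k : ℝ) ^ 4) atTop (𝓝 0) := by
  set θ := ∫ y, ∫ z, H y z ∂μ ∂μ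
  set R : ℕ → Ω → ℝ := fun k ω =>
    (∑ p ∈ orderedPairs (k ^ 2), (H (X p.1 ω) (X p.2 ω) - θ)) / (k : ℝ) ^ 4
  have hR_int : ∀ k, Integrable (fun ω => R k ω ^ 2) P := fun k => by
    have hR_meas : Measurable (R k) := (Finset.measurable_sum _ fun p _ =>
      (hH.comp ((hX p.1).prodMk (hX p.2))).sub_const θ).div_const _
    have hR_le : ∀ ω, |R k ω| ≤ #(orderedPairs (k ^ 2)) / (k : ℝ) ^ 4 := fun ω => by
      simp only [R, abs_div, abs_pow, Nat.abs_cast]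
      gcongr
      refine (abs_sum_le_sum_abs _ _).trans ?_
      simpa using sum_le_sum fun p (_ : p ∈ orderedPairs (k ^ 2)) =>
        abs_sub_integral_integral_le_one (μ := μ) hH0 hH1 (X p.1 ω) (X p.2 ω)
    refine .of_bound (hR_meas.pow_const 2).aestronglyMeasurable
      ((#(orderedPairs (k ^ 2)) / (k : ℝ) ^ 4) ^ 2) (ae_of_all _ fun ω => ?_)
    rw [Real.norm_eq_abs, abs_pow]
    exact pow_le_pow_left₀ (abs_nonneg _) (hR_le ω) 2
  have hR_sq : ∀ k, ∫ ω, R k ω ^ 2 ∂P ≤ 4 * (1 / (k : ℝ) ^ 2) := fun k => by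
    simp_rw [R, div_pow]
    rw [integral_div]
    rcases eq_or_ne k 0 with rfl | hk
    · simp
    calc _ ≤ 4 * ((k ^ 2 : ℕ) : ℝ) ^ 3 / ((k : ℝ) ^ 4) ^ 2 := by
          gcongr; exact integral_sq_sum_orderedPairs_sub_le hX hindep hlaw hH hH0 hH1 _
      _ = 4 * (1 / (k : ℝ) ^ 2) := by field_simp; push_cast; ring
  exact ae_tendsto_zero_of_summable_integral_sq hR_int
    (((Real.summable_one_div_nat_pow.2 one_lt_two).mul_left 4).of_nonneg_of_le
      (fun k => integral_nonneg fun _ => sq_nonneg _) hR_sq)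

theorem ae_tendsto_pairSum_div_sq (hX : ∀ i, Measurable (X i)) (hindep : iIndepFun X P)
    (hlaw : ∀ i, P.map (X i) = μ) (hH : Measurable (Function.uncurry H))
    (hH0 : ∀ y z, 0 ≤ H y z) (hH1 : ∀ y z, H y z ≤ 1) :
    ∀ᵐ ω ∂P, Tendsto (fun n : ℕ => pairSum H (X · ω) n / (n : ℝ) ^ 2) atTop
      (𝓝 ((∫ y, ∫ z, H y z ∂μ ∂μ) / 2)) := by
  set θ := ∫ y, ∫ z, H y z ∂μ ∂μ
  set U : ℕ → Ω → ℝ := fun n ω => ∑ p ∈ orderedPairs n, H (X p.1 ω) (X p.2 ω)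
  have hmean : Tendsto (fun k : ℕ => #(orderedPairs (k ^ 2)) * θ / (k : ℝ) ^ 4) atTop
      (𝓝 (θ / 2)) := by
    convert (tendsto_card_orderedPairs_div_sq.comp (tendsto_pow_atTop two_ne_zero)).mul_const θ
      using 1
    · ext k; simp only [Function.comp_apply]; push_cast; ring
    · rw [one_div_mul_eq_div]
  filter_upwards [ae_tendsto_sum_orderedPairs_sq_sub_div hX hindep hlaw hH hH0 hH1] with ω hω
  have hsquares : Tendsto (fun k : ℕ => U (k ^ 2) ω / (k : ℝ) ^ 4) atTop (𝓝 (θ / 2)) := by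
    convert hω.add hmean using 1
    · ext k; simp only [U, sum_sub_distrib, sum_const, nsmul_eq_mul]; ring
    · rw [zero_add]
  refine (tendsto_div_sq_of_monotone_of_tendsto_sq (u := (U · ω))
    (fun _ _ hmn => sum_le_sum_of_subset_of_nonneg (orderedPairs_mono hmn) fun _ _ _ => hH0 _ _)
    (fun n => sum_nonneg fun _ _ => hH0 _ _) hsquares).congr fun n => ?_
  rw [pairSum, sum_Ioo_Ioo_eq_sum_orderedPairs]

end UStatistic

theorem ae_mem_of_indepFun_of_forall_ae {Ω α β : Type*} [MeasurableSpace Ω] [MeasurableSpace α]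
    [MeasurableSpace β] {P : Measure Ω} [IsFiniteMeasure P] {X : Ω → α} {Y : Ω → β}
    (hX : Measurable X) (hY : Measurable Y) (hXY : IndepFun X Y P) {G : Set (α × β)}
    (hG : MeasurableSet G) (h : ∀ x, ∀ᵐ ω ∂P, (x, Y ω) ∈ G) :
    ∀ᵐ ω ∂P, (X ω, Y ω) ∈ G := by
  have hlaw : P.map (fun ω => (X ω, Y ω)) = (P.map X).prod (P.map Y) :=
    (indepFun_iff_map_prod_eq_prod_map_map hX.aemeasurable hY.aemeasurable).1 hXY
  have hprod : ∀ᵐ p ∂(P.map X).prod (P.map Y), p ∈ G :=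
    (Measure.ae_prod_mem_iff_ae_ae_mem hG).2 <| ae_of_all _ fun x =>
      (ae_map_iff hY.aemeasurable (measurable_prodMk_left hG)).2 (h x)
  rw [← hlaw] at hprod
  exact ae_of_ae_map (hX.prodMk hY).aemeasurable hprod

theorem ProbabilityTheory.iIndepFun.indepFun_zero_succ {Ω β : Type*} [MeasurableSpace Ω]
    [MeasurableSpace β] {P : Measure Ω} {X : ℕ → Ω → β} (hX : ∀ i, Measurable (X i))
    (hindep : iIndepFun X P) :
    IndepFun (X 0) (fun ω j => X (j + 1) ω) P := by
  set m : ℕ → MeasurableSpace Ω := fun i => MeasurableSpace.comap (X i) inferInstance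
  have h := indep_iSup_of_disjoint (fun i => (hX i).comap_le) hindep.iIndep
    (Set.disjoint_singleton_left.2 (Set.notMem_compl_iff.2 rfl) : Disjoint {0} ({0}ᶜ : Set ℕ))
  refine indep_of_indep_of_le_right (indep_of_indep_of_le_left h ?_) ?_
  · exact le_biSup m rfl
  · have hshift : Measurable[⨆ i ∈ ({0}ᶜ : Set ℕ), m i] fun ω j => X (j + 1) ω :=
      @measurable_pi_lambda _ _ _ (⨆ i ∈ ({0}ᶜ : Set ℕ), m i) _ _ fun j =>
        (comap_measurable (X (j + 1))).mono (le_biSup m j.succ_ne_zero) le_rfl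
    exact hshift.comap_le

noncomputable section Clustering

variable {α : Type*}

def edgeIndicator (E : Set (α × α)) (a b : α) : ℝ := E.indicator 1 (a, b)

def wedgeKernel (E : Set (α × α)) (x y z : α) : ℝ := edgeIndicator E x y * edgeIndicator E x z

def triangleKernel (E : Set (α × α)) (x y z : α) : ℝ :=
  edgeIndicator E x y * edgeIndicator E y z * edgeIndicator E z x

/-- The root `x` is vertex `0` and `s j` is the label of vertex `j` for `0 < j < n`; `s 0` is
never read. -/
def localClustering (E : Set (α × α)) (w : ℝ) (x : α) (s : ℕ → α) (n : ℕ) : ℝ :=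
  if 1 ≤ pairSum (wedgeKernel E x) s n then
    pairSum (triangleKernel E x) s n / pairSum (wedgeKernel E x) s n
  else w

theorem edgeIndicator_nonneg {E : Set (α × α)} (a b : α) : 0 ≤ edgeIndicator E a b :=
  Set.indicator_nonneg (fun _ _ => zero_le_one) _

theorem edgeIndicator_le_one {E : Set (α × α)} (a b : α) : edgeIndicator E a b ≤ 1 :=
  Set.indicator_le_self' (fun _ _ => zero_le_one) _

theorem wedgeKernel_mem_Icc {E : Set (α × α)} (x y z : α) :
    wedgeKernel E x y z ∈ Set.Icc (0 : ℝ) 1 :=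
  ⟨mul_nonneg (edgeIndicator_nonneg _ _) (edgeIndicator_nonneg _ _),
    mul_le_one₀ (edgeIndicator_le_one _ _) (edgeIndicator_nonneg _ _) (edgeIndicator_le_one _ _)⟩

theorem triangleKernel_mem_Icc {E : Set (α × α)} (x y z : α) :
    triangleKernel E x y z ∈ Set.Icc (0 : ℝ) 1 :=
  ⟨mul_nonneg (mul_nonneg (edgeIndicator_nonneg _ _) (edgeIndicator_nonneg _ _))
      (edgeIndicator_nonneg _ _),
    mul_le_one₀ (mul_le_one₀ (edgeIndicator_le_one _ _) (edgeIndicator_nonneg _ _)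
      (edgeIndicator_le_one _ _)) (edgeIndicator_nonneg _ _) (edgeIndicator_le_one _ _)⟩

theorem localClustering_congr {E : Set (α × α)} {w : ℝ} {x : α} {s t : ℕ → α}
    (h : ∀ j, j ≠ 0 → s j = t j) (n : ℕ) :
    localClustering E w x s n = localClustering E w x t n := by
  simp only [localClustering, pairSum_congr _ h]

variable [MeasurableSpace α]

def degreeDensity (E : Set (α × α)) (μ : Measure α) (x : α) : ℝ :=
  ∫ y, edgeIndicator E x y ∂μ

def triangleDensity (E : Set (α × α)) (μ : Measure α) (x : α) : ℝ :=
  ∫ y, ∫ z, triangleKernel E x y z ∂μ ∂μ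

def clusteringLimit (E : Set (α × α)) (μ : Measure α) (w : ℝ) (x : α) : ℝ :=
  if 0 < degreeDensity E μ x then triangleDensity E μ x / degreeDensity E μ x ^ 2 else w

variable {E : Set (α × α)}

theorem Measurable.edgeIndicator {γ : Type*} [MeasurableSpace γ] (hE : MeasurableSet E)
    {f g : γ → α} (hf : Measurable f) (hg : Measurable g) :
    Measurable fun c => edgeIndicator E (f c) (g c) :=
  (measurable_one.indicator hE).comp (hf.prodMk hg)

theorem measurable_triangleKernel (hE : MeasurableSet E) :
    Measurable fun q : α × α × α => triangleKernel E q.1 q.2.1 q.2.2 :=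
  ((measurable_fst.edgeIndicator hE measurable_snd.fst).mul
    (measurable_snd.fst.edgeIndicator hE measurable_snd.snd)).mul
    (measurable_snd.snd.edgeIndicator hE measurable_fst)

theorem measurable_wedgeKernel (hE : MeasurableSet E) :
    Measurable fun q : α × α × α => wedgeKernel E q.1 q.2.1 q.2.2 :=
  (measurable_fst.edgeIndicator hE measurable_snd.fst).mul
    (measurable_fst.edgeIndicator hE measurable_snd.snd)

theorem measurable_pairSum {F : α → α → α → ℝ}
    (hF : Measurable fun q : α × α × α => F q.1 q.2.1 q.2.2) (n : ℕ) :
    Measurable fun p : α × (ℕ → α) => pairSum (F p.1) p.2 n :=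
  Finset.measurable_sum _ fun j _ => Finset.measurable_sum _ fun k _ =>
    hF.comp (by fun_prop : Measurable fun p : α × (ℕ → α) => (p.1, p.2 j, p.2 k))

theorem measurable_degreeDensity (hE : MeasurableSet E) (μ : Measure α) [SFinite μ] :
    Measurable (degreeDensity E μ) :=
  (measurable_fst.edgeIndicator hE measurable_snd).stronglyMeasurable
    |>.integral_prod_right'.measurable

theorem measurable_triangleDensity (hE : MeasurableSet E) (μ : Measure α) [SFinite μ] :
    Measurable (triangleDensity E μ) := by
  have hT : Measurable fun q : (α × α) × α => triangleKernel E q.1.1 q.1.2 q.2 :=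
    (measurable_triangleKernel hE).comp
      (measurable_fst.fst.prodMk (measurable_fst.snd.prodMk measurable_snd))
  exact hT.stronglyMeasurable.integral_prod_right'.integral_prod_right'.measurable

theorem measurableSet_tendsto_localClustering (hE : MeasurableSet E) (μ : Measure α) [SFinite μ]
    (w : ℝ) : MeasurableSet {p : α × (ℕ → α) |
      Tendsto (fun n => localClustering E w p.1 p.2 n) atTop (𝓝 (clusteringLimit E μ w p.1))} := by
  refine measurableSet_tendsto_fun (fun n => ?_) ?_
  · have hT := measurable_pairSum (measurable_triangleKernel hE) n
    have hV := measurable_pairSum (measurable_wedgeKernel hE) n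
    exact Measurable.ite (measurableSet_le measurable_const hV) (hT.div hV) measurable_const
  · have hD : Measurable fun p : α × (ℕ → α) => degreeDensity E μ p.1 :=
      (measurable_degreeDensity hE μ).comp measurable_fst
    exact Measurable.ite (measurableSet_lt measurable_const hD)
      (((measurable_triangleDensity hE μ).comp measurable_fst).div (hD.pow_const 2))
      measurable_const

theorem integral_integral_wedgeKernel (μ : Measure α) (x : α) :
    ∫ y, ∫ z, wedgeKernel E x y z ∂μ ∂μ = degreeDensity E μ x ^ 2 := by
  simp only [wedgeKernel, integral_const_mul, integral_mul_const, degreeDensity, sq]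

theorem ae_localClustering_eq_of_degreeDensity_eq_zero {Ω : Type*} [MeasurableSpace Ω]
    {P : Measure Ω} {X : ℕ → Ω → α} {μ : Measure α} [IsFiniteMeasure μ] (hE : MeasurableSet E)
    (hX : ∀ i, Measurable (X i)) (hlaw : ∀ i, P.map (X i) = μ) (w : ℝ) {x : α}
    (hzero : degreeDensity E μ x = 0) :
    ∀ᵐ ω ∂P, ∀ n, localClustering E w x (X · ω) n = w := by
  have hnull : ∀ᵐ y ∂μ, edgeIndicator E x y = 0 := by
    refine (integral_eq_zero_iff_of_nonneg (edgeIndicator_nonneg x) (.of_bound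
      (measurable_const.edgeIndicator hE measurable_id).aestronglyMeasurable 1
      (ae_of_all _ fun y => ?_))).1 hzero
    rw [Real.norm_eq_abs, abs_of_nonneg (edgeIndicator_nonneg x y)]
    exact edgeIndicator_le_one x y
  have hisolated : ∀ᵐ ω ∂P, ∀ j, edgeIndicator E x (X j ω) = 0 :=
    ae_all_iff.2 fun j => ae_of_ae_map (hX j).aemeasurable (by rwa [hlaw j])
  filter_upwards [hisolated] with ω hω n
  have hwedge : pairSum (wedgeKernel E x) (X · ω) n = 0 := by simp [pairSum, wedgeKernel, hω]
  simp [localClustering, hwedge]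

theorem ae_tendsto_localClustering {Ω : Type*} [MeasurableSpace Ω] {P : Measure Ω}
    [IsProbabilityMeasure P] {X : ℕ → Ω → α} {μ : Measure α} [IsProbabilityMeasure μ]
    (hE : MeasurableSet E) (hX : ∀ i, Measurable (X i)) (hindep : iIndepFun X P)
    (hlaw : ∀ i, P.map (X i) = μ) (w : ℝ) (x : α) :
    ∀ᵐ ω ∂P, Tendsto (fun n => localClustering E w x (X · ω) n) atTop
      (𝓝 (clusteringLimit E μ w x)) := by
  have hnonneg : 0 ≤ degreeDensity E μ x := integral_nonneg (edgeIndicator_nonneg x)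
  rcases hnonneg.eq_or_lt with hzero | hpos
  · filter_upwards [ae_localClustering_eq_of_degreeDensity_eq_zero hE hX hlaw w hzero.symm]
      with ω hω
    simp only [hω, clusteringLimit, ← hzero, lt_irrefl, if_false, tendsto_const_nhds]
  have hT := ae_tendsto_pairSum_div_sq (H := triangleKernel E x) hX hindep hlaw
    ((measurable_triangleKernel hE).comp (measurable_const.prodMk measurable_id))
    (fun y z => (triangleKernel_mem_Icc x y z).1) (fun y z => (triangleKernel_mem_Icc x y z).2)
  have hV := ae_tendsto_pairSum_div_sq (H := wedgeKernel E x) hX hindep hlaw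
    ((measurable_wedgeKernel hE).comp (measurable_const.prodMk measurable_id))
    (fun y z => (wedgeKernel_mem_Icc x y z).1) (fun y z => (wedgeKernel_mem_Icc x y z).2)
  filter_upwards [hT, hV] with ω hTω hVω
  rw [integral_integral_wedgeKernel] at hVω
  have := tendsto_ite_div_of_tendsto_div_sq w (by positivity) hTω hVω
  rw [div_div_div_cancel_right₀ two_ne_zero] at this
  rwa [clusteringLimit, if_pos hpos]

end Clustering

-- The root, vertex `1` of the paper, is vertex `0` here; the graph has vertices `0, …, n - 1`.
theorem stmt4_general
    {Ω : Type*} [MeasurableSpace Ω] (P : Measure Ω) [IsProbabilityMeasure P]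
    (X : ℕ → Ω → ℝ) (hXmeas : ∀ i, Measurable (X i))
    (hindep : iIndepFun X P)
    (μ : Measure ℝ) [IsProbabilityMeasure μ]
    (hlaw : ∀ i, P.map (X i) = μ)
    (B : Set ℝ) (hB : MeasurableSet B)
    (fc : ℝ → ℝ → ℝ)
    (hfcmeas : Measurable fun p : ℝ × ℝ => fc p.1 p.2)
    (w : ℝ)
    (ED ET : ℝ → ℝ)
    (hED : ∀ x, ED x = ∫ y, (if fc x y ∈ B then (1 : ℝ) else 0) ∂μ)
    (hET : ∀ x, ET x = ∫ y, ∫ z, (if fc x y ∈ B then (1 : ℝ) else 0) *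
        (if fc y z ∈ B then (1 : ℝ) else 0) *
        (if fc z x ∈ B then (1 : ℝ) else 0) ∂μ ∂μ)
    (T V : ℕ → Ω → ℝ)
    (hT : ∀ n ω, T n ω = ∑ j ∈ Finset.Ioo 0 n, ∑ k ∈ Finset.Ioo j n,
        (if fc (X 0 ω) (X j ω) ∈ B then (1 : ℝ) else 0) *
          (if fc (X j ω) (X k ω) ∈ B then (1 : ℝ) else 0) *
          (if fc (X k ω) (X 0 ω) ∈ B then (1 : ℝ) else 0))
    (hV : ∀ n ω, V n ω = ∑ j ∈ Finset.Ioo 0 n, ∑ k ∈ Finset.Ioo j n,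
        (if fc (X 0 ω) (X j ω) ∈ B then (1 : ℝ) else 0) *
          (if fc (X 0 ω) (X k ω) ∈ B then (1 : ℝ) else 0)) :
    ∀ᵐ ω ∂P, Tendsto (fun n : ℕ =>
        if 1 ≤ V n ω then T n ω / V n ω else w)
      atTop (nhds (if 0 < ED (X 0 ω) then ET (X 0 ω) / ED (X 0 ω) ^ 2 else w)) := by
  set E : Set (ℝ × ℝ) := (fun p => fc p.1 p.2) ⁻¹' B
  obtain rfl : ED = degreeDensity E μ := funext hED
  obtain rfl : ET = triangleDensity E μ := funext hET
  have hC : ∀ ω n, (if 1 ≤ V n ω then T n ω / V n ω else w)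
      = localClustering E w (X 0 ω) (X · ω) n := fun ω n => by
    rw [hT, hV]; rfl
  -- `fun j => y (j - 1)` puts the tail `y = (X 1, X 2, …)` back at the indices `1, 2, …`
  let G := (fun p : ℝ × (ℕ → ℝ) => (p.1, fun j => p.2 (j - 1))) ⁻¹'
    {p | Tendsto (fun n => localClustering E w p.1 p.2 n) atTop (𝓝 (clusteringLimit E μ w p.1))}
  have hshift : ∀ ω j, j ≠ 0 → X (j - 1 + 1) ω = X j ω := fun ω j hj => by
    rw [Nat.sub_add_cancel (Nat.one_le_iff_ne_zero.2 hj)]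
  have hG : ∀ᵐ ω ∂P, (X 0 ω, fun j => X (j + 1) ω) ∈ G :=
    ae_mem_of_indepFun_of_forall_ae (hXmeas 0) (measurable_pi_lambda _ fun j => hXmeas (j + 1))
      (hindep.indepFun_zero_succ hXmeas)
      ((measurableSet_tendsto_localClustering (hfcmeas hB) μ w).preimage (by fun_prop))
      fun x => by
        filter_upwards [ae_tendsto_localClustering (hfcmeas hB) hXmeas hindep hlaw w x] with ω hω
        simpa only [G, Set.mem_preimage, Set.mem_ofPred_eq, localClustering_congr (hshift ω)]
          using hω
  filter_upwards [hG] with ω hω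
  simp only [G, Set.mem_preimage, Set.mem_ofPred_eq, localClustering_congr (hshift ω)] at hω
  simp only [hC]
  exact hω

/-- SLLN for the local clustering coefficient.  In the random graph on
`n` vertices `0, 1, …, n-1` (vertex `0` plays the role of vertex `1` of the paper) with
edge rule `f_c(X_i, X_j) ∈ B`, the local clustering coefficient
`C_n(1) = T_n(1)/V_n(1)` (with value `w` when `V_n(1) = 0`) converges almost surely to
`C(1) = E_T(X_1)/E_D(X_1)^2 · I{E_D(X_1) > 0} + w · I{E_D(X_1) = 0}`. -/
theorem stmt4
    {Ω : Type*} [MeasurableSpace Ω] (P : Measure Ω) [IsProbabilityMeasure P]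
    (X : ℕ → Ω → ℝ) (hXmeas : ∀ i, Measurable (X i))
    (hindep : iIndepFun X P)
    (μ : Measure ℝ) [IsProbabilityMeasure μ]
    (hlaw : ∀ i, P.map (X i) = μ)
    (B : Set ℝ) (hB : MeasurableSet B)
    (fc : ℝ → ℝ → ℝ)
    (hfcmeas : Measurable fun p : ℝ × ℝ => fc p.1 p.2)
    (hfcsym : ∀ a b, fc a b = fc b a)
    (w : ℝ)
    (ED ET : ℝ → ℝ)
    (hED : ∀ x, ED x = ∫ y, (if fc x y ∈ B then (1 : ℝ) else 0) ∂μ)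
    (hET : ∀ x, ET x = ∫ y, ∫ z, (if fc x y ∈ B then (1 : ℝ) else 0) *
        (if fc y z ∈ B then (1 : ℝ) else 0) *
        (if fc z x ∈ B then (1 : ℝ) else 0) ∂μ ∂μ)
    (T V : ℕ → Ω → ℝ)
    (hT : ∀ n ω, T n ω = ∑ j ∈ Finset.Ioo 0 n, ∑ k ∈ Finset.Ioo j n,
        (if fc (X 0 ω) (X j ω) ∈ B then (1 : ℝ) else 0) *
          (if fc (X j ω) (X k ω) ∈ B then (1 : ℝ) else 0) *
          (if fc (X k ω) (X 0 ω) ∈ B then (1 : ℝ) else 0))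
    (hV : ∀ n ω, V n ω = ∑ j ∈ Finset.Ioo 0 n, ∑ k ∈ Finset.Ioo j n,
        (if fc (X 0 ω) (X j ω) ∈ B then (1 : ℝ) else 0) *
          (if fc (X 0 ω) (X k ω) ∈ B then (1 : ℝ) else 0)) :
    ∀ᵐ ω ∂P, Tendsto (fun n : ℕ =>
        if 1 ≤ V n ω then T n ω / V n ω else w)
      atTop (nhds (if 0 < ED (X 0 ω) then ET (X 0 ω) / ED (X 0 ω) ^ 2 else w)) :=
  stmt4_general P X hXmeas hindep μ hlaw B hB fc hfcmeas w ED ET hED hET T V hT hV
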